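/- arXiv:1110.0167 — 4 statements merged into one kernel-verified Lean document; each statement's English description precedes it below -/
import Mathlib

section
/- Under the standing assumptions, for every θ > 0 there exist constants 0 < c ≤ C such that for all w = (w₁, w₂) ∈ H × H: c·(‖w₁‖² + ‖A^{1/2} w₂‖²) ≤ [w, w]_θ ≤ C·(‖w₁‖² + ‖A^{1/2} w₂‖²); that is, the norm |w|_θ = √([w,w]_θ) is topologically equivalent to the energy norm on H × H. -/
open scoped InnerProductSpace ComplexOrder

/-- The sesquilinear form `[w, v]_θ` on `H × H`, where `S = A^{1/2}` and
`Sinv = A^{-1/2}`. -/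
noncomputable def formTheta {H : Type*} [NormedAddCommGroup H] [InnerProductSpace ℂ H]
    (D S Sinv : H →L[ℂ] H) (θ : ℝ) (w v : H × H) : ℂ :=
  inner ℂ w.1 v.1 + (θ : ℂ) * inner ℂ (Sinv w.1) (Sinv v.1) + inner ℂ (S w.2) (S v.2)
    + (θ : ℂ) * inner ℂ w.2 v.2 + (θ : ℂ) * inner ℂ (Sinv (D w.2)) (Sinv (D v.2))
    + (θ : ℂ) * inner ℂ (Sinv (D w.2)) (Sinv v.1) + (θ : ℂ) * inner ℂ (Sinv w.1) (Sinv (D v.2))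

/-!
Expanding the square, `[w, w]_θ = ‖w₁‖² + ‖S w₂‖² + θ (‖w₂‖² + ‖S⁻¹ (w₁ + D w₂)‖²)`.
For `θ ≥ 0` this gives the lower bound with `c = 1`; the `θ`-term is bounded by the energy
because `w₂ = S⁻¹ (S w₂)` and `S⁻¹`, `D` are bounded.
-/

section

variable {H : Type*} [NormedAddCommGroup H] [InnerProductSpace ℂ H]

lemma formTheta_self (D S Sinv : H →L[ℂ] H) (θ : ℝ) (w : H × H) :
    formTheta D S Sinv θ w w
      = ((‖w.1‖ ^ 2 + ‖S w.2‖ ^ 2 + θ * (‖w.2‖ ^ 2 + ‖Sinv (w.1 + D w.2)‖ ^ 2) : ℝ) : ℂ) := by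
  have h : formTheta D S Sinv θ w w
      = inner ℂ w.1 w.1 + inner ℂ (S w.2) (S w.2) + (θ : ℂ) * inner ℂ w.2 w.2
        + (θ : ℂ) * inner ℂ (Sinv w.1 + Sinv (D w.2)) (Sinv w.1 + Sinv (D w.2)) := by
    rw [inner_add_add_self]
    simp only [formTheta]
    ring
  rw [h, map_add]
  simp only [inner_self_eq_norm_sq_to_K, Complex.coe_algebraMap]
  push_cast
  ring

lemma ContinuousLinearMap.norm_le_opNorm_mul_norm_of_comp_eq_id {𝕜 E F : Type*}
    [NontriviallyNormedField 𝕜] [SeminormedAddCommGroup E] [SeminormedAddCommGroup F]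
    [NormedSpace 𝕜 E] [NormedSpace 𝕜 F]
    {S : E →L[𝕜] F} {L : F →L[𝕜] E} (hLS : L.comp S = ContinuousLinearMap.id 𝕜 E) (x : E) :
    ‖x‖ ≤ ‖L‖ * ‖S x‖ := by
  calc ‖x‖ = ‖L (S x)‖ := by rw [← L.comp_apply, hLS, ContinuousLinearMap.id_apply]
    _ ≤ ‖L‖ * ‖S x‖ := L.le_opNorm _

lemma formTheta_remainder_le (D S Sinv : H →L[ℂ] H) (hSinv' : Sinv * S = 1) (w : H × H) :
    ‖w.2‖ ^ 2 + ‖Sinv (w.1 + D w.2)‖ ^ 2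
      ≤ 4 * (‖Sinv‖ * (1 + ‖D‖ * ‖Sinv‖)) ^ 2 * (‖w.1‖ ^ 2 + ‖S w.2‖ ^ 2) := by
  set M := ‖Sinv‖ * (1 + ‖D‖ * ‖Sinv‖)
  have hw₂ : ‖w.2‖ ≤ ‖Sinv‖ * ‖S w.2‖ :=
    ContinuousLinearMap.norm_le_opNorm_mul_norm_of_comp_eq_id hSinv' w.2
  have hM : ‖Sinv‖ ≤ M :=
    le_mul_of_one_le_right (norm_nonneg _) (le_add_of_nonneg_right (by positivity))
  have h₂ : ‖w.2‖ ≤ M * (‖w.1‖ + ‖S w.2‖) := by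
    calc ‖w.2‖ ≤ ‖Sinv‖ * ‖S w.2‖ := hw₂
      _ ≤ M * (‖w.1‖ + ‖S w.2‖) := by gcongr; simp
  have h₁ : ‖Sinv (w.1 + D w.2)‖ ≤ M * (‖w.1‖ + ‖S w.2‖) := by
    calc ‖Sinv (w.1 + D w.2)‖ ≤ ‖Sinv‖ * (‖w.1‖ + ‖D‖ * ‖w.2‖) := by
          refine (Sinv.le_opNorm _).trans ?_
          gcongr
          exact (norm_add_le _ _).trans (by gcongr; exact D.le_opNorm _)
      _ ≤ ‖Sinv‖ * (‖w.1‖ + ‖D‖ * (‖Sinv‖ * ‖S w.2‖)) := by gcongr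
      _ ≤ M * (‖w.1‖ + ‖S w.2‖) := by
          have hpos₁ : 0 ≤ ‖Sinv‖ * (‖D‖ * ‖Sinv‖) * ‖w.1‖ := by positivity
          have hpos₂ : 0 ≤ ‖Sinv‖ * ‖S w.2‖ := by positivity
          nlinarith
  calc ‖w.2‖ ^ 2 + ‖Sinv (w.1 + D w.2)‖ ^ 2 ≤ 2 * (M * (‖w.1‖ + ‖S w.2‖)) ^ 2 := by
        have hsq₁ := pow_le_pow_left₀ (norm_nonneg _) h₁ 2
        have hsq₂ := pow_le_pow_left₀ (norm_nonneg _) h₂ 2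
        linarith
    _ = 2 * M ^ 2 * (‖w.1‖ + ‖S w.2‖) ^ 2 := by ring
    _ ≤ 2 * M ^ 2 * (2 * (‖w.1‖ ^ 2 + ‖S w.2‖ ^ 2)) := by gcongr; exact add_sq_le
    _ = 4 * M ^ 2 * (‖w.1‖ ^ 2 + ‖S w.2‖ ^ 2) := by ring

end

theorem formTheta_equiv_energy_general
    {H : Type*} [NormedAddCommGroup H] [InnerProductSpace ℂ H]
    (D S Sinv : H →L[ℂ] H)
    (hSinv' : Sinv * S = 1)
    (θ : ℝ) (hθ : 0 < θ) :
    ∃ c C : ℝ, 0 < c ∧ c ≤ C ∧ ∀ w : H × H,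
      ((c * (‖w.1‖ ^ 2 + ‖S w.2‖ ^ 2) : ℝ) : ℂ) ≤ formTheta D S Sinv θ w w ∧
      formTheta D S Sinv θ w w ≤ ((C * (‖w.1‖ ^ 2 + ‖S w.2‖ ^ 2) : ℝ) : ℂ) := by
  set K := 4 * (‖Sinv‖ * (1 + ‖D‖ * ‖Sinv‖)) ^ 2
  refine ⟨1, 1 + θ * K, one_pos, le_add_of_nonneg_right (by positivity), fun w => ?_⟩
  have hrem := formTheta_remainder_le D S Sinv hSinv' w
  have hrem₀ : 0 ≤ ‖w.2‖ ^ 2 + ‖Sinv (w.1 + D w.2)‖ ^ 2 := by positivity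
  rw [formTheta_self, Complex.real_le_real, Complex.real_le_real]
  constructor
  · nlinarith
  · nlinarith

/-- For every `θ > 0` there are constants `0 < c ≤ C` such that for all
`w ∈ H × H`: `c·(‖w₁‖² + ‖A^{1/2} w₂‖²) ≤ [w, w]_θ ≤ C·(‖w₁‖² + ‖A^{1/2} w₂‖²)`,
i.e. the norm `|·|_θ` is topologically equivalent to the energy norm on `H × H`. -/
theorem formTheta_equiv_energy
    {H : Type*} [NormedAddCommGroup H] [InnerProductSpace ℂ H] [CompleteSpace H]
    [Nontrivial H]
    (A D S Sinv : H →L[ℂ] H)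
    (hA : IsSelfAdjoint A) (a₀ : ℝ) (ha₀ : 0 < a₀)
    (hApd : ∀ x : H, a₀ * ‖x‖ ^ 2 ≤ (inner ℂ (A x) x : ℂ).re)
    (hSsa : IsSelfAdjoint S) (hSpos : ∀ x : H, 0 ≤ (inner ℂ (S x) x : ℂ).re)
    (hSsq : S * S = A)
    (hSinv : S * Sinv = 1) (hSinv' : Sinv * S = 1)
    (hDacc : ∀ x : H, 0 ≤ (inner ℂ (D x) x : ℂ).re)
    (θ : ℝ) (hθ : 0 < θ) :
    ∃ c C : ℝ, 0 < c ∧ c ≤ C ∧ ∀ w : H × H,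
      ((c * (‖w.1‖ ^ 2 + ‖S w.2‖ ^ 2) : ℝ) : ℂ) ≤ formTheta D S Sinv θ w w ∧
      formTheta D S Sinv θ w w ≤ ((C * (‖w.1‖ ^ 2 + ‖S w.2‖ ^ 2) : ℝ) : ℂ) :=
  formTheta_equiv_energy_general D S Sinv hSinv' θ hθ
end

section
/- Under the standing assumptions, the semigroup generated by T is contractive in the energy norm: for every t ≥ 0 and every w = (w₁, w₂) ∈ H × H, writing exp(tT) for the operator exponential, one has ‖exp(tT) w‖_E ≤ ‖w‖_E, where ‖w‖_E² = ‖w₁‖² + ‖A^{1/2} w₂‖². -/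
/-!
The energy `‖w₁‖² + ‖S w₂‖²` is a Lyapunov function for `w' = T w`: along `w = (x, y)` its
derivative is `2 re⟪x, -D x - A y⟫ + 2 re⟪S y, S x⟫`, and since `S` is selfadjoint with
`S² = A` the second term is `2 re⟪A y, x⟫`, so the coupling terms cancel and only
`-2 re⟪D x, x⟫ ≤ 0` is left.
-/

set_option maxSynthPendingDepth 3

open scoped InnerProductSpace

/-- The matrix operator `T(w₁, w₂) = (−D w₁ − A w₂, w₁)` on `H × H`. -/
noncomputable def Tlin {H : Type*} [NormedAddCommGroup H] [InnerProductSpace ℂ H]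
    (A D : H →L[ℂ] H) : (H × H) →L[ℂ] (H × H) :=
  ((-(D.comp (ContinuousLinearMap.fst ℂ H H)))
      - A.comp (ContinuousLinearMap.snd ℂ H H)).prod (ContinuousLinearMap.fst ℂ H H)

section Lyapunov

variable {E : Type*} [NormedAddCommGroup E] [NormedSpace ℂ E] [CompleteSpace E]

theorem hasDerivAt_exp_smul_apply (T : E →L[ℂ] E) (w : E) (s : ℝ) :
    HasDerivAt (fun r : ℝ => NormedSpace.exp (r • T) w) (T (NormedSpace.exp (s • T) w)) s :=
  ((ContinuousLinearMap.apply ℂ E w).restrictScalars ℝ).hasFDerivAt.comp_hasDerivAt s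
    (hasDerivAt_exp_smul_const' T s)

theorem comp_exp_smul_apply_le_of_fderiv_nonpos {q : E → ℝ} (hq : Differentiable ℝ q)
    (T : E →L[ℂ] E) (hT : ∀ w, fderiv ℝ q w (T w) ≤ 0) {t : ℝ} (ht : 0 ≤ t) (w : E) :
    q (NormedSpace.exp (t • T) w) ≤ q w := by
  have hderiv (s : ℝ) : HasDerivAt (fun r : ℝ => q (NormedSpace.exp (r • T) w))
      (fderiv ℝ q _ (T (NormedSpace.exp (s • T) w))) s :=
    (hq _).hasFDerivAt.comp_hasDerivAt s (hasDerivAt_exp_smul_apply T w s)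
  have hanti : Antitone fun r : ℝ => q (NormedSpace.exp (r • T) w) :=
    antitone_of_deriv_nonpos (fun s => (hderiv s).differentiableAt)
      fun s => (hderiv s).deriv ▸ hT _
  simpa using hanti ht

end Lyapunov

section Energy

attribute [local instance] InnerProductSpace.complexToReal

variable {H : Type*} [NormedAddCommGroup H] [InnerProductSpace ℂ H]

def energy (S : H →L[ℂ] H) (w : H × H) : ℝ := ‖w.1‖ ^ 2 + ‖S w.2‖ ^ 2

theorem hasFDerivAt_energy (S : H →L[ℂ] H) (w : H × H) :
    HasFDerivAt (energy S) (2 • ((innerSL ℝ w.1).comp (.fst ℝ H H)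
      + (innerSL ℝ (S w.2)).comp ((S.restrictScalars ℝ).comp (.snd ℝ H H)))) w := by
  rw [smul_add]
  exact hasFDerivAt_fst.norm_sq.add
    ((S.restrictScalars ℝ).hasFDerivAt.comp w hasFDerivAt_snd).norm_sq

theorem differentiable_energy (S : H →L[ℂ] H) : Differentiable ℝ (energy S) :=
  fun w => (hasFDerivAt_energy S w).differentiableAt

theorem inner_Tlin_energy [CompleteSpace H] {A D S : H →L[ℂ] H} (hSsa : IsSelfAdjoint S)
    (hSsq : S * S = A) (w : H × H) :
    ⟪w.1, (Tlin A D w).1⟫_ℝ + ⟪S w.2, S (Tlin A D w).2⟫_ℝ = -(inner ℂ (D w.1) w.1).re := by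
  have hS : ⟪S w.2, S w.1⟫_ℝ = ⟪w.1, A w.2⟫_ℝ := by
    rw [real_inner_comm, real_inner_eq_re_inner ℂ, real_inner_eq_re_inner ℂ, ← hSsq,
      mul_apply_eq_comp]
    exact congrArg _ (hSsa.isSymmetric _ _)
  simp only [Tlin, ContinuousLinearMap.prod_apply, sub_apply, neg_apply,
    ContinuousLinearMap.comp_apply, ContinuousLinearMap.coe_fst', ContinuousLinearMap.coe_snd',
    inner_sub_right, inner_neg_right, hS]
  rw [real_inner_comm, real_inner_eq_re_inner ℂ, RCLike.re_to_complex]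
  ring

theorem fderiv_energy_Tlin_nonpos [CompleteSpace H] {A D S : H →L[ℂ] H}
    (hSsa : IsSelfAdjoint S) (hSsq : S * S = A) (hDacc : ∀ x : H, 0 ≤ (inner ℂ (D x) x).re)
    (w : H × H) : fderiv ℝ (energy S) w (Tlin A D w) ≤ 0 := by
  simp only [(hasFDerivAt_energy S w).fderiv, smul_apply, add_apply,
    ContinuousLinearMap.comp_apply, innerSL_apply_apply, ContinuousLinearMap.coe_fst',
    ContinuousLinearMap.coe_snd', ContinuousLinearMap.coe_restrictScalars', nsmul_eq_mul,
    Nat.cast_ofNat, inner_Tlin_energy hSsa hSsq]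
  linarith [hDacc w.1]

end Energy

theorem exp_T_contractive_general
    {H : Type*} [NormedAddCommGroup H] [InnerProductSpace ℂ H] [CompleteSpace H]
    (A D S : H →L[ℂ] H)
    (hSsa : IsSelfAdjoint S)
    (hSsq : S * S = A)
    (hDacc : ∀ x : H, 0 ≤ (inner ℂ (D x) x : ℂ).re)
    (t : ℝ) (ht : 0 ≤ t) (w : H × H) :
    ‖(NormedSpace.exp (t • Tlin A D) w).1‖ ^ 2
      + ‖S (NormedSpace.exp (t • Tlin A D) w).2‖ ^ 2
    ≤ ‖w.1‖ ^ 2 + ‖S w.2‖ ^ 2 :=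
  comp_exp_smul_apply_le_of_fderiv_nonpos (differentiable_energy S) (Tlin A D)
    (fderiv_energy_Tlin_nonpos hSsa hSsq hDacc) ht w

/-- The semigroup generated by `T` is contractive in the energy norm:
for every `t ≥ 0` and `w ∈ H × H`, `‖exp(tT) w‖_E ≤ ‖w‖_E`, where
`‖w‖_E² = ‖w₁‖² + ‖A^{1/2} w₂‖²` and `S = A^{1/2}`. -/
theorem exp_T_contractive
    {H : Type*} [NormedAddCommGroup H] [InnerProductSpace ℂ H] [CompleteSpace H]
    [Nontrivial H]
    (A D S Sinv : H →L[ℂ] H)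
    (hA : IsSelfAdjoint A) (a₀ : ℝ) (ha₀ : 0 < a₀)
    (hApd : ∀ x : H, a₀ * ‖x‖ ^ 2 ≤ (inner ℂ (A x) x : ℂ).re)
    (hSsa : IsSelfAdjoint S) (hSpos : ∀ x : H, 0 ≤ (inner ℂ (S x) x : ℂ).re)
    (hSsq : S * S = A)
    (hSinv : S * Sinv = 1) (hSinv' : Sinv * S = 1)
    (hDacc : ∀ x : H, 0 ≤ (inner ℂ (D x) x : ℂ).re)
    (t : ℝ) (ht : 0 ≤ t) (w : H × H) :
    ‖(NormedSpace.exp (t • Tlin A D) w).1‖ ^ 2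
      + ‖S (NormedSpace.exp (t • Tlin A D) w).2‖ ^ 2
    ≤ ‖w.1‖ ^ 2 + ‖S w.2‖ ^ 2 :=
  exp_T_contractive_general A D S hSsa hSsq hDacc t ht w
end

section
/- (Proposition 1, real part) Under the standing assumptions, if δ > 0, then for every θ > 0 the constant ω_θ is well defined and positive, and for all w ∈ H × H one has re [T w, w]_θ ≤ −ω_θ · [w, w]_θ. -/
/-!
Expanding the form, the mixed terms of `[T w, w]_θ` cancel and
`re [T w, w]_θ = -(re ⟪D w₁, w₁⟫ + θ re ⟪D w₂, w₂⟫)`. In `[w, w]_θ`, the terms `‖w₁‖²` and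
`θ ‖w₂‖²` are controlled by `β`, and `‖D‖ₒₚ` reduces the rest to a quadratic form in
`p = ‖A^{-1/2} w₁‖`, `q = ‖A^{1/2} w₂‖` with matrix `[[θ, θ‖D‖ₒₚ], [θ‖D‖ₒₚ, 1 + θ‖D‖ₒₚ²]]`.
Since `α p² + θ δ q² ≤ re ⟪D w₁, w₁⟫ + θ re ⟪D w₂, w₂⟫`, that form is bounded by the largest
eigenvalue of this matrix relative to `diag (α, θ δ)`, which is `1 / ω_θ - 1 / β`.
-/

set_option maxSynthPendingDepth 3

open scoped InnerProductSpace

/-- The largest root `λ` of `det ([[x, y], [y, z]] - λ • diag (a, b)) = 0`. -/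
noncomputable def pencilMaxEigenvalue (a b x y z : ℝ) : ℝ :=
  (x / a + z / b + √((x / a + z / b) ^ 2 - 4 * ((x * z - y ^ 2) / (a * b)))) / 2

theorem IsSelfAdjoint.of_mul_eq_one {R : Type*} [Monoid R] [StarMul R] {s t : R}
    (hs : IsSelfAdjoint s) (h₁ : s * t = 1) (h₂ : t * s = 1) : IsSelfAdjoint t :=
  letI : Invertible s := ⟨t, h₂, h₁⟩
  IsSelfAdjoint.invOf s hs

theorem two_mul_mul_le_of_sq_le_mul {x y z : ℝ} (hx : 0 ≤ x) (hz : 0 ≤ z) (hy : y ^ 2 ≤ x * z)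
    (p q : ℝ) : 2 * y * p * q ≤ x * p ^ 2 + z * q ^ 2 := by
  rcases hx.eq_or_lt with rfl | hx
  · obtain rfl : y = 0 := by nlinarith
    nlinarith
  · have : 0 ≤ x * (x * p ^ 2 + z * q ^ 2 - 2 * y * p * q) := by
      nlinarith [sq_nonneg (x * p - y * q), sq_nonneg q]
    nlinarith [(mul_nonneg_iff_of_pos_left hx).mp this]

section PencilMaxEigenvalue

variable {a b x y z : ℝ}

theorem pencilMaxEigenvalue_spec (ha : 0 < a) (hb : 0 < b) :
    x / a ≤ pencilMaxEigenvalue a b x y z ∧ z / b ≤ pencilMaxEigenvalue a b x y z ∧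
      (pencilMaxEigenvalue a b x y z * a - x) * (pencilMaxEigenvalue a b x y z * b - z)
        = y ^ 2 := by
  have hdisc : (x / a + z / b) ^ 2 - 4 * ((x * z - y ^ 2) / (a * b))
      = (x / a - z / b) ^ 2 + 4 * (y ^ 2 / (a * b)) := by
    field_simp; ring
  rw [pencilMaxEigenvalue, hdisc]
  set s := √((x / a - z / b) ^ 2 + 4 * (y ^ 2 / (a * b)))
  have hs : s ^ 2 = (x / a - z / b) ^ 2 + 4 * (y ^ 2 / (a * b)) := Real.sq_sqrt (by positivity)
  have hs_ge : |x / a - z / b| ≤ s := by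
    rw [← Real.sqrt_sq_eq_abs]
    exact Real.sqrt_le_sqrt (le_add_of_nonneg_right (by positivity))
  refine ⟨by linarith [(abs_le.mp hs_ge).2], by linarith [(abs_le.mp hs_ge).1], ?_⟩
  have key : ((x / a + z / b + s) / 2 - x / a) * ((x / a + z / b + s) / 2 - z / b)
      = y ^ 2 / (a * b) := by
    linear_combination hs / 4
  calc ((x / a + z / b + s) / 2 * a - x) * ((x / a + z / b + s) / 2 * b - z)
      = a * b * (((x / a + z / b + s) / 2 - x / a) * ((x / a + z / b + s) / 2 - z / b)) := by
        field_simp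
    _ = y ^ 2 := by rw [key]; field_simp

theorem pencilMaxEigenvalue_nonneg (ha : 0 < a) (hb : 0 < b) (hx : 0 ≤ x) :
    0 ≤ pencilMaxEigenvalue a b x y z :=
  (div_nonneg hx ha.le).trans (pencilMaxEigenvalue_spec ha hb).1

theorem quadratic_form_le_pencilMaxEigenvalue (ha : 0 < a) (hb : 0 < b) (p q : ℝ) :
    x * p ^ 2 + 2 * y * p * q + z * q ^ 2
      ≤ pencilMaxEigenvalue a b x y z * (a * p ^ 2 + b * q ^ 2) := by
  obtain ⟨hx, hz, hprod⟩ := pencilMaxEigenvalue_spec (x := x) (y := y) (z := z) ha hb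
  have hx' : 0 ≤ pencilMaxEigenvalue a b x y z * a - x := by
    rw [div_le_iff₀ ha] at hx; linarith
  have hz' : 0 ≤ pencilMaxEigenvalue a b x y z * b - z := by
    rw [div_le_iff₀ hb] at hz; linarith
  linarith [two_mul_mul_le_of_sq_le_mul hx' hz' hprod.ge p q]

theorem pencilMaxEigenvalue_theta_eq {α δ θ N : ℝ} (hα : 0 < α) (hδ : 0 < δ) (hθ : 0 < θ) :
    pencilMaxEigenvalue α (θ * δ) θ (θ * N) (1 + θ * N ^ 2)
      = N ^ 2 / (2 * δ) + (θ / α + 1 / (θ * δ)) / 2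
        + √((θ / α + 1 / (θ * δ) + N ^ 2 / δ) ^ 2 - 4 / (α * δ)) / 2 := by
  have htrace : θ / α + (1 + θ * N ^ 2) / (θ * δ) = θ / α + 1 / (θ * δ) + N ^ 2 / δ := by
    field_simp; ring
  have hdet : 4 * ((θ * (1 + θ * N ^ 2) - (θ * N) ^ 2) / (α * (θ * δ))) = 4 / (α * δ) := by
    field_simp; ring
  rw [pencilMaxEigenvalue, htrace, hdet]
  ring

end PencilMaxEigenvalue

section Coercivity

variable {E F : Type*} [Zero E] [NormedAddCommGroup F] {f : E → ℝ} {V : E → F}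

theorem iInf_div_norm_sq_mul_le (hf : ∀ x, 0 ≤ f x) (hV : V 0 = 0) (x : E) :
    (⨅ y : {y : E // y ≠ 0}, f y / ‖V y‖ ^ 2) * ‖V x‖ ^ 2 ≤ f x := by
  rcases eq_or_ne (V x) 0 with hVx | hVx
  · simpa [hVx] using hf x
  have hx : x ≠ 0 := by rintro rfl; exact hVx hV
  have hbdd : BddBelow (Set.range fun y : {y : E // y ≠ 0} => f y / ‖V y‖ ^ 2) :=
    ⟨0, by rintro _ ⟨y, rfl⟩; exact div_nonneg (hf y) (sq_nonneg _)⟩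
  calc (⨅ y : {y : E // y ≠ 0}, f y / ‖V y‖ ^ 2) * ‖V x‖ ^ 2 ≤ f x / ‖V x‖ ^ 2 * ‖V x‖ ^ 2 := by
        gcongr; exact ciInf_le hbdd ⟨x, hx⟩
    _ = f x := div_mul_cancel₀ _ (by positivity)

theorem mul_le_iInf_div_norm_sq [Nontrivial E] {U : E → F} {a c : ℝ} (hc : 0 ≤ c)
    (hV : ∀ x, x ≠ 0 → V x ≠ 0) (hUV : ∀ x, a * ‖V x‖ ^ 2 ≤ ‖U x‖ ^ 2)
    (hf : ∀ x, c * ‖U x‖ ^ 2 ≤ f x) : a * c ≤ ⨅ y : {y : E // y ≠ 0}, f y / ‖V y‖ ^ 2 :=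
  have : Nonempty {y : E // y ≠ 0} := (exists_ne 0).elim fun y hy => ⟨⟨y, hy⟩⟩
  le_ciInf fun y => (le_div_iff₀ (by have := hV y y.2; positivity)).2 <| by
    nlinarith [mul_le_mul_of_nonneg_left (hUV y) hc, hf y]

end Coercivity

section Hilbert

variable {H : Type*} [NormedAddCommGroup H] [InnerProductSpace ℂ H] {A D S Sinv : H →L[ℂ] H}

theorem norm_apply_le_opNorm_conj (hSinvS : Sinv * S = 1) (x : H) :
    ‖Sinv (D x)‖ ≤ ‖Sinv * D * Sinv‖ * ‖S x‖ := by
  have hx : Sinv (S x) = x := by rw [← mul_apply_eq_comp, hSinvS, one_apply_eq_self]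
  simpa [hx] using (Sinv * D * Sinv).le_opNorm (S x)

theorem Tlin_apply (w : H × H) : Tlin A D w = (-D w.1 - A w.2, w.1) := rfl

theorem re_formTheta_self (θ : ℝ) (w : H × H) :
    (formTheta D S Sinv θ w w).re
      = ‖w.1‖ ^ 2 + θ * ‖Sinv w.1‖ ^ 2 + ‖S w.2‖ ^ 2 + θ * ‖w.2‖ ^ 2
        + θ * ‖Sinv (D w.2)‖ ^ 2 + 2 * θ * (⟪Sinv (D w.2), Sinv w.1⟫_ℂ).re := by
  simp only [formTheta, Complex.add_re, Complex.re_ofReal_mul]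
  simp only [← RCLike.re_to_complex, inner_self_eq_norm_sq]
  rw [inner_re_symm (Sinv w.1)]
  ring

theorem re_formTheta_self_le {α β δ θ N : ℝ} (hα : 0 < α) (hβ : 0 < β) (hδ : 0 < δ)
    (hθ : 0 < θ) (hDα : ∀ x, α * ‖Sinv x‖ ^ 2 ≤ (⟪D x, x⟫_ℂ).re)
    (hDβ : ∀ x, β * ‖x‖ ^ 2 ≤ (⟪D x, x⟫_ℂ).re) (hDδ : ∀ x, δ * ‖S x‖ ^ 2 ≤ (⟪D x, x⟫_ℂ).re)
    (hN : ∀ x, ‖Sinv (D x)‖ ≤ N * ‖S x‖) (w : H × H) :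
    (formTheta D S Sinv θ w w).re
      ≤ (1 / β + pencilMaxEigenvalue α (θ * δ) θ (θ * N) (1 + θ * N ^ 2))
        * ((⟪D w.1, w.1⟫_ℂ).re + θ * (⟪D w.2, w.2⟫_ℂ).re) := by
  set C := pencilMaxEigenvalue α (θ * δ) θ (θ * N) (1 + θ * N ^ 2)
  set a := (⟪D w.1, w.1⟫_ℂ).re
  set b := (⟪D w.2, w.2⟫_ℂ).re
  set p := ‖Sinv w.1‖
  set q := ‖S w.2‖
  have hθδ : 0 < θ * δ := mul_pos hθ hδ
  have hC : 0 ≤ C := pencilMaxEigenvalue_nonneg hα hθδ hθ.le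
  have h₁ : ‖w.1‖ ^ 2 ≤ a / β := (le_div_iff₀ hβ).2 (by linarith [hDβ w.1])
  have h₂ : ‖w.2‖ ^ 2 ≤ b / β := (le_div_iff₀ hβ).2 (by linarith [hDβ w.2])
  have hr : ‖Sinv (D w.2)‖ ^ 2 ≤ N ^ 2 * q ^ 2 := by
    rw [← mul_pow]; exact pow_le_pow_left₀ (norm_nonneg _) (hN w.2) 2
  have hX : (⟪Sinv (D w.2), Sinv w.1⟫_ℂ).re ≤ N * q * p :=
    (re_inner_le_norm (𝕜 := ℂ) _ _).trans (mul_le_mul_of_nonneg_right (hN w.2) (norm_nonneg _))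
  rw [re_formTheta_self]
  calc _ ≤ a / β + θ * (b / β) + (θ * p ^ 2 + 2 * (θ * N) * p * q + (1 + θ * N ^ 2) * q ^ 2) := by
        linarith [mul_le_mul_of_nonneg_left hr hθ.le, mul_le_mul_of_nonneg_left hX hθ.le,
          mul_le_mul_of_nonneg_left h₂ hθ.le]
    _ ≤ a / β + θ * (b / β) + C * (α * p ^ 2 + θ * δ * q ^ 2) := by
        gcongr; exact quadratic_form_le_pencilMaxEigenvalue hα hθδ p q
    _ ≤ a / β + θ * (b / β) + C * (a + θ * b) := by
        gcongr _ + C * ?_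
        linarith [hDα w.1, mul_le_mul_of_nonneg_left (hDδ w.2) hθ.le]
    _ = (1 / β + C) * (a + θ * b) := by ring

variable [CompleteSpace H]

theorem IsSelfAdjoint.norm_apply_sq (hS : IsSelfAdjoint S) (x : H) :
    ‖S x‖ ^ 2 = (⟪(S * S) x, x⟫_ℂ).re := by
  simpa [hS.adjoint_eq] using S.apply_norm_sq_eq_inner_adjoint_left x

theorem re_formTheta_Tlin (hS : IsSelfAdjoint S) (hSinv : IsSelfAdjoint Sinv)
    (hSinvS : Sinv * S = 1) (hA : S * S = A) (θ : ℝ) (w : H × H) :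
    (formTheta D S Sinv θ (Tlin A D w) w).re
      = -((⟪D w.1, w.1⟫_ℂ).re + θ * (⟪D w.2, w.2⟫_ℂ).re) := by
  have hSinvA : ∀ x, Sinv (A x) = S x := fun x => by
    rw [← hA, mul_apply_eq_comp, ← mul_apply_eq_comp Sinv, hSinvS, one_apply_eq_self]
  have hAS : ∀ x y, ⟪A x, y⟫_ℂ = ⟪S x, S y⟫_ℂ := fun x y => by
    rw [← hA, mul_apply_eq_comp, ← hS.adjoint_eq,
      ContinuousLinearMap.adjoint_inner_left, hS.adjoint_eq]
  have hSSinv : ∀ x y, ⟪S x, Sinv y⟫_ℂ = ⟪x, y⟫_ℂ := fun x y => by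
    rw [← hSinv.adjoint_eq, ContinuousLinearMap.adjoint_inner_right, ← mul_apply_eq_comp,
      hSinvS, one_apply_eq_self]
  simp only [formTheta, Tlin_apply, map_sub, map_neg, inner_sub_left, inner_neg_left, hSinvA,
    hAS, hSSinv, Complex.add_re, Complex.sub_re, Complex.neg_re, Complex.re_ofReal_mul]
  rw [← inner_conj_symm (S w.2), ← inner_conj_symm w.2 w.1, ← inner_conj_symm w.2 (D w.2)]
  simp only [Complex.conj_re]
  ring

end Hilbert

theorem prop1_re_general
    {H : Type*} [NormedAddCommGroup H] [InnerProductSpace ℂ H] [CompleteSpace H]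
    [Nontrivial H]
    (A D S Sinv : H →L[ℂ] H)
    (a₀ : ℝ) (ha₀ : 0 < a₀)
    (hApd : ∀ x : H, a₀ * ‖x‖ ^ 2 ≤ (inner ℂ (A x) x : ℂ).re)
    (hSsa : IsSelfAdjoint S)
    (hSsq : S * S = A)
    (hSinv : S * Sinv = 1) (hSinv' : Sinv * S = 1)
    (hDacc : ∀ x : H, 0 ≤ (inner ℂ (D x) x : ℂ).re)
    (α β δ : ℝ)
    (hα : α = ⨅ x : {x : H // x ≠ 0}, (inner ℂ (D (x : H)) (x : H) : ℂ).re / ‖Sinv (x : H)‖ ^ 2)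
    (hβ : β = ⨅ x : {x : H // x ≠ 0}, (inner ℂ (D (x : H)) (x : H) : ℂ).re / ‖(x : H)‖ ^ 2)
    (hδ : δ = ⨅ x : {x : H // x ≠ 0}, (inner ℂ (D (x : H)) (x : H) : ℂ).re / ‖S (x : H)‖ ^ 2)
    (hδpos : 0 < δ)
    (θ : ℝ) (hθ : 0 < θ)
    (ω : ℝ)
    (hω : ω = (1 / β + ‖Sinv * D * Sinv‖ ^ 2 / (2 * δ)
        + (θ / α + 1 / (θ * δ)) / 2
        + Real.sqrt ((θ / α + 1 / (θ * δ) + ‖Sinv * D * Sinv‖ ^ 2 / δ) ^ 2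
            - 4 / (α * δ)) / 2)⁻¹) :
    0 < ω ∧
    ∀ w : H × H,
      (formTheta D S Sinv θ (Tlin A D w) w).re ≤ -ω * (formTheta D S Sinv θ w w).re := by
  have hSSinv : ∀ x, S (Sinv x) = x := fun x => by
    rw [← mul_apply_eq_comp, hSinv, one_apply_eq_self]
  have hS : ∀ x, a₀ * ‖x‖ ^ 2 ≤ ‖S x‖ ^ 2 := fun x => by
    rw [hSsa.norm_apply_sq, hSsq]; exact hApd x
  have hDδ : ∀ x, δ * ‖S x‖ ^ 2 ≤ (⟪D x, x⟫_ℂ).re :=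
    fun x => hδ ▸ iInf_div_norm_sq_mul_le hDacc (map_zero S) x
  have hβ₀ : 0 < β := (mul_pos ha₀ hδpos).trans_le <|
    hβ ▸ mul_le_iInf_div_norm_sq (V := id) hδpos.le (fun _ hx => hx) hS hDδ
  have hDβ : ∀ x, β * ‖x‖ ^ 2 ≤ (⟪D x, x⟫_ℂ).re :=
    fun x => hβ ▸ iInf_div_norm_sq_mul_le (V := id) hDacc rfl x
  have hα₀ : 0 < α := (mul_pos ha₀ hβ₀).trans_le <| hα ▸ mul_le_iInf_div_norm_sq (U := id) hβ₀.le
    (fun x hx h => hx (by rw [← hSSinv x, h, map_zero]))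
    (fun x => by simpa only [hSSinv, id] using hS (Sinv x)) hDβ
  have hDα : ∀ x, α * ‖Sinv x‖ ^ 2 ≤ (⟪D x, x⟫_ℂ).re :=
    fun x => hα ▸ iInf_div_norm_sq_mul_le hDacc (map_zero Sinv) x
  obtain rfl : ω = (1 / β + pencilMaxEigenvalue α (θ * δ) θ (θ * ‖Sinv * D * Sinv‖)
      (1 + θ * ‖Sinv * D * Sinv‖ ^ 2))⁻¹ := by
    rw [hω, pencilMaxEigenvalue_theta_eq hα₀ hδpos hθ]; ring
  have hC := pencilMaxEigenvalue_nonneg (y := θ * ‖Sinv * D * Sinv‖)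
    (z := 1 + θ * ‖Sinv * D * Sinv‖ ^ 2) hα₀ (mul_pos hθ hδpos) hθ.le
  refine ⟨by positivity, fun w => ?_⟩
  rw [re_formTheta_Tlin hSsa (hSsa.of_mul_eq_one hSinv hSinv') hSinv' hSsq, neg_mul,
    neg_le_neg_iff, inv_mul_le_iff₀ (by positivity)]
  exact re_formTheta_self_le hα₀ hβ₀ hδpos hθ hDα hDβ hDδ (norm_apply_le_opNorm_conj hSinv') w

/-- Proposition 1, real part: if `δ > 0`, then for every `θ > 0` the
constant `ω_θ` is well defined and positive, and `re [T w, w]_θ ≤ −ω_θ · [w, w]_θ`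
for all `w ∈ H × H`. Here `S = A^{1/2}`, `Sinv = A^{-1/2}` and
`‖D‖ₒₚ = ‖A^{-1/2} D A^{-1/2}‖`. -/
theorem prop1_re
    {H : Type*} [NormedAddCommGroup H] [InnerProductSpace ℂ H] [CompleteSpace H]
    [Nontrivial H]
    (A D S Sinv : H →L[ℂ] H)
    (hA : IsSelfAdjoint A) (a₀ : ℝ) (ha₀ : 0 < a₀)
    (hApd : ∀ x : H, a₀ * ‖x‖ ^ 2 ≤ (inner ℂ (A x) x : ℂ).re)
    (hSsa : IsSelfAdjoint S) (hSpos : ∀ x : H, 0 ≤ (inner ℂ (S x) x : ℂ).re)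
    (hSsq : S * S = A)
    (hSinv : S * Sinv = 1) (hSinv' : Sinv * S = 1)
    (hDacc : ∀ x : H, 0 ≤ (inner ℂ (D x) x : ℂ).re)
    (ν : ℝ) (hν : 0 < ν)
    (hDsec : ∀ x : H, |(inner ℂ (D x) x : ℂ).im| ≤ ν * (inner ℂ (D x) x : ℂ).re)
    (α β δ : ℝ)
    (hα : α = ⨅ x : {x : H // x ≠ 0}, (inner ℂ (D (x : H)) (x : H) : ℂ).re / ‖Sinv (x : H)‖ ^ 2)
    (hβ : β = ⨅ x : {x : H // x ≠ 0}, (inner ℂ (D (x : H)) (x : H) : ℂ).re / ‖(x : H)‖ ^ 2)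
    (hδ : δ = ⨅ x : {x : H // x ≠ 0}, (inner ℂ (D (x : H)) (x : H) : ℂ).re / ‖S (x : H)‖ ^ 2)
    (hδpos : 0 < δ)
    (θ : ℝ) (hθ : 0 < θ)
    (ω : ℝ)
    (hω : ω = (1 / β + ‖Sinv * D * Sinv‖ ^ 2 / (2 * δ)
        + (θ / α + 1 / (θ * δ)) / 2
        + Real.sqrt ((θ / α + 1 / (θ * δ) + ‖Sinv * D * Sinv‖ ^ 2 / δ) ^ 2
            - 4 / (α * δ)) / 2)⁻¹) :
    0 < ω ∧
    ∀ w : H × H,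
      (formTheta D S Sinv θ (Tlin A D w) w).re ≤ -ω * (formTheta D S Sinv θ w w).re :=
  prop1_re_general A D S Sinv a₀ ha₀ hApd hSsa hSsq hSinv hSinv' hDacc α β δ hα hβ hδ hδpos θ hθ ω
    hω
end

section
/- Under the standing assumptions, if δ > 0, then for every θ > 0 the spectrum of T is contained in the set {λ ∈ ℂ : re λ ≤ −ω_θ and |im λ| ≤ (ν + 1/(δ√θ) + √θ/β)·|re λ|}. -/
set_option maxSynthPendingDepth 3

open scoped InnerProductSpace

/-!
If `λ ∈ σ(T)`, the quadratic pencil `P(λ) = λ² + λ D + A` is not invertible, so its numerical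
range comes arbitrarily close to `0`: there are unit vectors `x` with `λ² + d λ + a ≈ 0`, where
`d = ⟪x, D x⟫` and `a = ⟪x, A x⟫` obey the inequalities defining `α, β, δ, ν, ‖D‖ₒₚ`. These
inequalities cut out a compact set of pairs `(d, a)`, so `λ` is an exact root of `z² + d z + a`
for an admissible pair, and both bounds become estimates on the roots of a scalar quadratic:
`re λ (|λ|² + a) = -re d |λ|²` controls the real part, and `im λ (|λ|² - a) = -im d |λ|²`
together with the sector condition controls the imaginary part.
-/

lemma le_larger_root_mul {a b c s : ℝ} (hs : 0 ≤ s)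
    (h : 2 * a ≤ b * s ∨ a ^ 2 + c * s ^ 2 ≤ b * a * s) :
    a ≤ (b / 2 + √(b ^ 2 - 4 * c) / 2) * s := by
  rcases h with h | h
  · nlinarith [mul_nonneg (Real.sqrt_nonneg (b ^ 2 - 4 * c)) hs]
  · have hroot : √((b ^ 2 - 4 * c) * s ^ 2) = √(b ^ 2 - 4 * c) * s := by
      rw [Real.sqrt_mul' _ (sq_nonneg s), Real.sqrt_sq hs]
    have : 2 * a - b * s ≤ √(b ^ 2 - 4 * c) * s :=
      hroot ▸ (le_abs_self _).trans (Real.abs_le_sqrt (by nlinarith))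
    linarith

lemma abs_mul_add_le {y t a : ℝ} (ha : 0 ≤ a) (hyt : y ^ 2 ≤ t) :
    |y| * (t + a) ≤ |y| * |t - a| + 2 * t * √a := by
  have ht : 0 ≤ t := (sq_nonneg y).trans hyt
  rcases le_total t a with hta | hat
  · have hya : |y| ≤ √a := Real.abs_le_sqrt (hyt.trans hta)
    rw [abs_of_nonpos (sub_nonpos.2 hta)]
    nlinarith [mul_le_mul_of_nonneg_left hya ht]
  · have hyt' : |y| * √a ≤ t := by
      calc |y| * √a ≤ √t * √t :=
            mul_le_mul (Real.abs_le_sqrt hyt) (Real.sqrt_le_sqrt hat) (Real.sqrt_nonneg a)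
              (Real.sqrt_nonneg t)
        _ = t := Real.mul_self_sqrt ht
    have hya : |y| * a = |y| * √a * √a := by rw [mul_assoc, Real.mul_self_sqrt ha]
    rw [abs_of_nonneg (sub_nonneg.2 hat)]
    nlinarith [mul_le_mul_of_nonneg_right hyt' (Real.sqrt_nonneg a)]

lemma two_le_mul_sqrt {α δ θ : ℝ} (hα : 0 < α) (hδ : 0 < δ) (hθ : 0 < θ) :
    2 ≤ (θ / α + 1 / (θ * δ)) * √(α * δ) := by
  have hq := Real.sq_sqrt (mul_pos hα hδ).le
  have hq0 := Real.sqrt_pos.2 (mul_pos hα hδ)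
  have hamgm : 2 * θ * √(α * δ) ≤ θ * (θ * δ) + α := by
    nlinarith [sq_nonneg (θ * δ - √(α * δ))]
  rw [div_add_div _ _ hα.ne' (by positivity), div_mul_eq_mul_div, le_div_iff₀ (by positivity)]
  nlinarith [mul_le_mul_of_nonneg_right hamgm hq0.le]

lemma sq_add_inv_sq_mul_sq_le {a t r q u v : ℝ} (ht : 0 < t) (hq : 0 < q)
    (hqr : q ≤ r) (huq : 2 ≤ u * q) (hv : 0 ≤ v) (hta : (t - a) ^ 2 ≤ v * a * (r * t))
    (hlt : (u + v) * (r * t) < 2 * a) :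
    a ^ 2 + 1 / q ^ 2 * (r * t) ^ 2 ≤ (u + v) * a * (r * t) := by
  have hrt : 0 < r * t := mul_pos (hq.trans_le hqr) ht
  have hs : r * t ≤ a * q := by
    nlinarith [mul_pos (sub_pos.2 hlt) hq, mul_nonneg (sub_nonneg.2 huq) hrt.le,
      mul_nonneg (mul_nonneg hv hrt.le) hq.le]
  -- the hints are the terms of a sum-of-squares certificate
  have hcert : a ^ 2 * q ^ 2 + (r * t) ^ 2 ≤ (u + v) * a * (r * t) * q ^ 2 := by
    nlinarith [mul_nonneg (sub_nonneg.2 hta) (sq_nonneg q),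
      mul_nonneg (mul_nonneg (sub_nonneg.2 hs) (sub_nonneg.2 huq)) hrt.le,
      mul_nonneg (sub_nonneg.2 hs) (mul_nonneg (sub_nonneg.2 hqr) ht.le),
      mul_nonneg (sq_nonneg (r - q)) (sq_nonneg t),
      mul_nonneg (mul_nonneg (sub_nonneg.2 huq) (sq_nonneg r)) (sq_nonneg t)]
  rw [← mul_le_mul_iff_of_pos_right (pow_pos hq 2)]
  field_simp
  linarith

section QuadraticRoot
open Complex
variable {lam d : ℂ} {a : ℝ}

lemma re_im_eq_zero_of_quadratic (h : lam ^ 2 + d * lam + a = 0) :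
    lam.re * lam.re - lam.im * lam.im + (d.re * lam.re - d.im * lam.im) + a = 0 ∧
      2 * lam.re * lam.im + (d.re * lam.im + d.im * lam.re) = 0 := by
  constructor
  · simpa [sq] using congrArg re h
  · linear_combination (by simpa [sq] using congrArg im h :
      lam.re * lam.im + lam.im * lam.re + (d.re * lam.im + d.im * lam.re) = 0)

lemma re_mul_sq_norm_add_eq (h : lam ^ 2 + d * lam + a = 0) :
    lam.re * (‖lam‖ ^ 2 + a) = -(d.re * ‖lam‖ ^ 2) := by
  obtain ⟨hre, him⟩ := re_im_eq_zero_of_quadratic h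
  rw [Complex.sq_norm, normSq_apply]
  linear_combination lam.re * hre + lam.im * him

lemma im_mul_sq_norm_sub_eq (h : lam ^ 2 + d * lam + a = 0) :
    lam.im * (‖lam‖ ^ 2 - a) = -(d.im * ‖lam‖ ^ 2) := by
  obtain ⟨hre, him⟩ := re_im_eq_zero_of_quadratic h
  rw [Complex.sq_norm, normSq_apply]
  linear_combination lam.re * him - lam.im * hre

lemma sq_norm_mul_sq_norm_eq (h : lam ^ 2 + d * lam + a = 0) :
    ‖d‖ ^ 2 * ‖lam‖ ^ 2 = (‖lam‖ ^ 2 - a) ^ 2 + 4 * a * lam.re ^ 2 := by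
  obtain ⟨hre, him⟩ := re_im_eq_zero_of_quadratic h
  rw [Complex.sq_norm, Complex.sq_norm, normSq_apply, normSq_apply]
  linear_combination
    ((d.re * lam.re - d.im * lam.im) - (lam.re * lam.re - lam.im * lam.im + a)) * hre
      + ((d.re * lam.im + d.im * lam.re) - 2 * lam.re * lam.im) * him

lemma ne_zero_of_quadratic (h : lam ^ 2 + d * lam + a = 0) (ha : a ≠ 0) : lam ≠ 0 := by
  rintro rfl
  simp_all

lemma le_larger_root_mul_of_quadratic {α δ K u : ℝ} (h : lam ^ 2 + d * lam + a = 0)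
    (ha : 0 < a) (hα : 0 < α) (hδ : 0 < δ) (hδd : δ * a ≤ d.re) (hαd : α ≤ d.re * a)
    (hdK : ‖d‖ ≤ K * a) (hu : 2 ≤ u * √(α * δ)) :
    a ≤ ((u + K ^ 2 / δ) / 2 + √((u + K ^ 2 / δ) ^ 2 - 4 / (α * δ)) / 2)
      * (d.re * ‖lam‖ ^ 2) := by
  set t := ‖lam‖ ^ 2
  have ht : 0 < t := by positivity [ne_zero_of_quadratic h ha.ne']
  have hdr : 0 < d.re := (mul_pos hδ ha).trans_le hδd
  have hq0 : 0 < √(α * δ) := Real.sqrt_pos.2 (by positivity)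
  have hq : √(α * δ) ≤ d.re := (Real.sqrt_le_left hdr.le).2 (by nlinarith)
  have hta : (t - a) ^ 2 ≤ K ^ 2 / δ * a * (d.re * t) := by
    have hd : ‖d‖ ^ 2 ≤ K ^ 2 / δ * a * d.re := by
      rw [div_mul_eq_mul_div, div_mul_eq_mul_div, le_div_iff₀ hδ]
      nlinarith [pow_le_pow_left₀ (norm_nonneg d) hdK 2,
        mul_le_mul_of_nonneg_left hδd (by positivity : 0 ≤ K ^ 2 * a)]
    nlinarith [sq_norm_mul_sq_norm_eq h, sq_nonneg lam.re]
  rw [← mul_one_div 4]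
  refine le_larger_root_mul (by positivity) ?_
  rcases le_or_gt (2 * a) ((u + K ^ 2 / δ) * (d.re * t)) with hle | hlt
  · exact .inl hle
  · have := sq_add_inv_sq_mul_sq_le ht hq0 hq hu (by positivity) hta hlt
    rw [Real.sq_sqrt (by positivity)] at this
    exact .inr this

lemma re_le_of_quadratic {α β δ K u : ℝ} (h : lam ^ 2 + d * lam + a = 0) (ha : 0 < a)
    (hα : 0 < α) (hβ : 0 < β) (hδ : 0 < δ) (hβd : β ≤ d.re) (hδd : δ * a ≤ d.re)
    (hαd : α ≤ d.re * a) (hdK : ‖d‖ ≤ K * a) (hu : 2 ≤ u * √(α * δ)) :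
    lam.re ≤ -(1 / β + K ^ 2 / (2 * δ) + u / 2
      + √((u + K ^ 2 / δ) ^ 2 - 4 / (α * δ)) / 2)⁻¹ := by
  set t := ‖lam‖ ^ 2
  set Z := 1 / β + K ^ 2 / (2 * δ) + u / 2 + √((u + K ^ 2 / δ) ^ 2 - 4 / (α * δ)) / 2
  have ht : 0 < t := by positivity [ne_zero_of_quadratic h ha.ne']
  have hu0 : 0 < u := pos_of_mul_pos_left (two_pos.trans_le hu) (Real.sqrt_nonneg _)
  have hZ : t + a ≤ Z * (d.re * t) := by
    have htβ : t ≤ 1 / β * (d.re * t) := by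
      rw [div_mul_eq_mul_div, le_div_iff₀ hβ]; nlinarith
    have hsplit : Z * (d.re * t) = 1 / β * (d.re * t)
        + ((u + K ^ 2 / δ) / 2 + √((u + K ^ 2 / δ) ^ 2 - 4 / (α * δ)) / 2) * (d.re * t) := by
      ring
    linarith [le_larger_root_mul_of_quadratic h ha hα hδ hδd hαd hdK hu]
  have hx : -lam.re * (t + a) = d.re * t := by linarith [re_mul_sq_norm_add_eq h]
  rw [le_neg, inv_le_iff_one_le_mul₀ (by positivity)]
  refine le_of_mul_le_mul_right ?_ (by positivity : 0 < t + a)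
  calc 1 * (t + a) ≤ Z * (d.re * t) := by linarith
    _ = -lam.re * Z * (t + a) := by rw [← hx]; ring

lemma abs_im_le_of_quadratic {β δ ν θ : ℝ} (h : lam ^ 2 + d * lam + a = 0) (ha : 0 < a)
    (hβ : 0 < β) (hδ : 0 < δ) (hθ : 0 < θ) (hβd : β ≤ d.re) (hδd : δ * a ≤ d.re)
    (hsec : |d.im| ≤ ν * d.re) :
    |lam.im| ≤ (ν + 1 / (δ * √θ) + √θ / β) * |lam.re| := by
  set t := ‖lam‖ ^ 2
  have ht : 0 < t := by positivity [ne_zero_of_quadratic h ha.ne']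
  have hdr : 0 < d.re := hβ.trans_le hβd
  have hsθ : 0 < √θ := Real.sqrt_pos.2 hθ
  have hx : |lam.re| * (t + a) = d.re * t := by
    rw [← abs_of_pos (by positivity : 0 < t + a), ← abs_mul, re_mul_sq_norm_add_eq h, abs_neg,
      abs_of_pos (by positivity)]
  have hy : |lam.im| * |t - a| ≤ ν * d.re * t := by
    rw [← abs_mul, im_mul_sq_norm_sub_eq h, abs_neg, abs_mul, abs_of_pos ht]
    exact mul_le_mul_of_nonneg_right hsec ht.le
  have hyt : lam.im ^ 2 ≤ t := by nlinarith [Complex.sq_norm_sub_sq_re lam, sq_nonneg lam.re]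
  have hamgm : 2 * √a * √θ ≤ a + θ := by
    nlinarith [sq_nonneg (√a - √θ), Real.sq_sqrt ha.le, Real.sq_sqrt hθ.le]
  have hC : ν * d.re * √θ + a + θ ≤ (ν + 1 / (δ * √θ) + √θ / β) * d.re * √θ := by
    have h1 : a ≤ 1 / (δ * √θ) * d.re * √θ := by
      rw [div_mul_eq_mul_div, div_mul_eq_mul_div, le_div_iff₀ (by positivity)]; nlinarith
    have h2 : θ ≤ √θ / β * d.re * √θ := by
      rw [div_mul_eq_mul_div, div_mul_eq_mul_div, le_div_iff₀ hβ, mul_right_comm,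
        Real.mul_self_sqrt hθ.le]
      nlinarith
    nlinarith
  refine le_of_mul_le_mul_right ?_ (by positivity : 0 < (t + a) * √θ)
  calc |lam.im| * ((t + a) * √θ) ≤ (|lam.im| * |t - a| + 2 * t * √a) * √θ := by
        rw [← mul_assoc]
        exact mul_le_mul_of_nonneg_right (abs_mul_add_le ha.le hyt) hsθ.le
    _ ≤ (ν * d.re * √θ + a + θ) * t := by nlinarith
    _ ≤ (ν + 1 / (δ * √θ) + √θ / β) * d.re * √θ * t := mul_le_mul_of_nonneg_right hC ht.le
    _ = (ν + 1 / (δ * √θ) + √θ / β) * |lam.re| * ((t + a) * √θ) := by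
        rw [← mul_assoc, mul_assoc _ |lam.re|, hx]; ring

end QuadraticRoot

lemma IsSelfAdjoint.of_mul_eq_one_s10 {M : Type*} [Monoid M] [StarMul M] {a b : M}
    (ha : IsSelfAdjoint a) (hab : a * b = 1) : IsSelfAdjoint b := by
  have : star b * a = 1 := by simpa [ha.star_eq] using congrArg star hab
  exact left_inv_eq_right_inv this hab

lemma IsCompact.exists_eq_of_forall_dist_lt {X Y : Type*} [TopologicalSpace X] [MetricSpace Y]
    {s : Set X} (hs : IsCompact s) {f : X → Y} (hf : Continuous f) {y : Y}
    (h : ∀ ε > 0, ∃ x ∈ s, dist (f x) y < ε) : ∃ x ∈ s, f x = y :=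
  (hs.image hf).isClosed.closure_subset <| Metric.mem_closure_iff.2 fun ε hε =>
    let ⟨x, hx, hxy⟩ := h ε hε
    ⟨f x, Set.mem_image_of_mem f hx, by rwa [dist_comm]⟩

section InnerProductSpace
variable {H : Type*} [NormedAddCommGroup H] [InnerProductSpace ℂ H]

lemma exists_norm_eq_one_norm_inner_lt [CompleteSpace H] {P : H →L[ℂ] H} (hP : ¬IsUnit P)
    {ε : ℝ} (hε : 0 < ε) : ∃ x, ‖x‖ = 1 ∧ ‖⟪x, P x⟫_ℂ‖ < ε := by
  by_contra! h
  refine hP (P.isUnit_of_forall_le_norm_inner_map (c := ⟨ε, hε.le⟩) hε fun x => ?_)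
  rcases eq_or_ne x 0 with rfl | hx
  · simp
  have hx0 : 0 < ‖x‖ := norm_pos_iff.2 hx
  have hunit := h ((‖x‖⁻¹ : ℂ) • x) (by simp [norm_smul, hx0.ne'])
  rw [map_smul, inner_smul_left, inner_smul_right, norm_mul, norm_mul, RCLike.norm_conj,
    norm_inv, Complex.norm_real, norm_norm, ← mul_assoc, ← sq, inv_pow,
    ← div_eq_inv_mul, le_div_iff₀ (by positivity)] at hunit
  change ‖x‖ ^ 2 * ε ≤ _
  rw [norm_inner_symm]
  linarith

variable {A D S Sinv : H →L[ℂ] H}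

lemma norm_le_opNorm_mul_norm_apply (h : Sinv * S = 1) (x : H) : ‖x‖ ≤ ‖Sinv‖ * ‖S x‖ := by
  calc ‖x‖ = ‖Sinv (S x)‖ := by rw [← mul_apply_eq_comp, h]; rfl
    _ ≤ ‖Sinv‖ * ‖S x‖ := Sinv.le_opNorm _

variable [CompleteSpace H]

lemma inner_apply_eq_sq_norm (hS : IsSelfAdjoint S) (hA : S * S = A) (x : H) :
    ⟪x, A x⟫_ℂ = (‖S x‖ ^ 2 : ℝ) := by
  have hsym : ⟪S x, S x⟫_ℂ = ⟪x, S (S x)⟫_ℂ := hS.isSymmetric x (S x)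
  rw [← hA, mul_apply_eq_comp, ← hsym]
  simp [inner_self_eq_norm_sq_to_K]

lemma sq_norm_le_norm_mul_norm (hS : IsSelfAdjoint S) (h : S * Sinv = 1) (x : H) :
    ‖x‖ ^ 2 ≤ ‖Sinv x‖ * ‖S x‖ := by
  have : ⟪x, x⟫_ℂ = ⟪Sinv x, S x⟫_ℂ := by
    have hsym : ⟪S (Sinv x), x⟫_ℂ = ⟪Sinv x, S x⟫_ℂ := hS.isSymmetric (Sinv x) x
    rw [← hsym, ← mul_apply_eq_comp, h]
    rfl
  calc ‖x‖ ^ 2 = ‖⟪x, x⟫_ℂ‖ := by simp [inner_self_eq_norm_sq_to_K]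
    _ ≤ ‖Sinv x‖ * ‖S x‖ := this ▸ norm_inner_le_norm _ _

lemma norm_inner_le_opNorm_mul_sq_norm (hS : IsSelfAdjoint S) (h : S * Sinv = 1)
    (h' : Sinv * S = 1) (x : H) : ‖⟪x, D x⟫_ℂ‖ ≤ ‖Sinv * D * Sinv‖ * ‖S x‖ ^ 2 := by
  have hx : Sinv (S x) = x := by rw [← mul_apply_eq_comp, h']; rfl
  have : ⟪x, D x⟫_ℂ = ⟪S x, (Sinv * D * Sinv) (S x)⟫_ℂ := by
    have hsym : ⟪Sinv (S x), D x⟫_ℂ = ⟪S x, Sinv (D x)⟫_ℂ :=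
      (hS.of_mul_eq_one_s10 h).isSymmetric (S x) (D x)
    rw [mul_apply_eq_comp, mul_apply_eq_comp, hx, ← hsym, hx]
  calc ‖⟪x, D x⟫_ℂ‖ ≤ ‖S x‖ * ‖(Sinv * D * Sinv) (S x)‖ := this ▸ norm_inner_le_norm _ _
    _ ≤ ‖S x‖ * (‖Sinv * D * Sinv‖ * ‖S x‖) := by gcongr; exact ContinuousLinearMap.le_opNorm _ _
    _ = ‖Sinv * D * Sinv‖ * ‖S x‖ ^ 2 := by ring

end InnerProductSpace

section Coercivity
variable {H : Type*} [NormedAddCommGroup H] [InnerProductSpace ℂ H]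

-- `α, β, δ` are `coercivityConst D N` for `N x = ‖A^{-1/2} x‖, ‖x‖, ‖A^{1/2} x‖`.
noncomputable def coercivityConst (D : H →L[ℂ] H) (N : H → ℝ) : ℝ :=
  ⨅ x : {x : H // x ≠ 0}, (⟪D x, x⟫_ℂ).re / N x ^ 2

variable {D : H →L[ℂ] H} (hD : ∀ x, 0 ≤ (⟪D x, x⟫_ℂ).re)
include hD

lemma coercivityConst_nonneg (N : H → ℝ) : 0 ≤ coercivityConst D N :=
  Real.iInf_nonneg fun x => div_nonneg (hD x) (sq_nonneg _)

lemma coercivityConst_mul_le (N : H → ℝ) {x : H} (hx : x ≠ 0) :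
    coercivityConst D N * N x ^ 2 ≤ (⟪D x, x⟫_ℂ).re := by
  rcases eq_or_ne (N x) 0 with hN | hN
  · simpa [hN] using hD x
  rw [← le_div_iff₀ (by positivity)]
  exact ciInf_le (f := fun y : {x : H // x ≠ 0} => (⟪D y, y⟫_ℂ).re / N y ^ 2)
    ⟨0, Set.forall_mem_range.2 fun y => div_nonneg (hD y) (sq_nonneg _)⟩ ⟨x, hx⟩

lemma div_sq_le_coercivityConst [Nontrivial H] {S : H →L[ℂ] H} {N : H → ℝ} {C : ℝ}
    (hC : 0 < C) (hN : ∀ x, x ≠ 0 → 0 < N x) (hNS : ∀ x, N x ≤ C * ‖S x‖) :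
    coercivityConst D (‖S ·‖) / C ^ 2 ≤ coercivityConst D N := by
  obtain ⟨x₀, hx₀⟩ := exists_ne (0 : H)
  have : Nonempty {x : H // x ≠ 0} := ⟨⟨x₀, hx₀⟩⟩
  refine le_ciInf fun ⟨x, hx⟩ => (le_div_iff₀ (pow_pos (hN x hx) 2)).2 ?_
  have hNx : N x ^ 2 ≤ C ^ 2 * ‖S x‖ ^ 2 := by
    rw [← mul_pow]; exact pow_le_pow_left₀ (hN x hx).le (hNS x) 2
  calc coercivityConst D (‖S ·‖) / C ^ 2 * N x ^ 2
      ≤ coercivityConst D (‖S ·‖) / C ^ 2 * (C ^ 2 * ‖S x‖ ^ 2) := by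
        gcongr; exact div_nonneg (coercivityConst_nonneg hD _) (sq_nonneg C)
    _ = coercivityConst D (‖S ·‖) * ‖S x‖ ^ 2 := by field_simp
    _ ≤ (⟪D x, x⟫_ℂ).re := coercivityConst_mul_le hD _ hx

lemma coercivityConst_norm_pos [Nontrivial H] {S Sinv : H →L[ℂ] H} (h' : Sinv * S = 1)
    (hδ : 0 < coercivityConst D (‖S ·‖)) : 0 < coercivityConst D (‖·‖) := by
  have hSinv : 0 < ‖Sinv‖ := norm_pos_iff.2 (left_ne_zero_of_mul_eq_one h')
  exact (div_pos hδ (pow_pos hSinv 2)).trans_le <| div_sq_le_coercivityConst hD hSinv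
    (fun x hx => norm_pos_iff.2 hx) (norm_le_opNorm_mul_norm_apply h')

lemma coercivityConst_inv_pos [Nontrivial H] {S Sinv : H →L[ℂ] H} (h : S * Sinv = 1)
    (h' : Sinv * S = 1) (hδ : 0 < coercivityConst D (‖S ·‖)) :
    0 < coercivityConst D (‖Sinv ·‖) := by
  have hSinv : 0 < ‖Sinv‖ := norm_pos_iff.2 (left_ne_zero_of_mul_eq_one h')
  refine (div_pos hδ (by positivity)).trans_le <|
    div_sq_le_coercivityConst hD (C := ‖Sinv‖ ^ 2) (by positivity) (fun x hx => ?_) fun x => ?_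
  · refine norm_pos_iff.2 fun h0 => hx ?_
    rw [← one_apply_eq_self (F := H →L[ℂ] H) x, ← h, mul_apply_eq_comp, h0, map_zero]
  · calc ‖Sinv x‖ ≤ ‖Sinv‖ * ‖x‖ := Sinv.le_opNorm x
      _ ≤ ‖Sinv‖ * (‖Sinv‖ * ‖S x‖) := by gcongr; exact norm_le_opNorm_mul_norm_apply h' x
      _ = ‖Sinv‖ ^ 2 * ‖S x‖ := by ring

end Coercivity

open ContinuousLinearMap in
lemma isUnit_sub_Tlin {H : Type*} [NormedAddCommGroup H] [InnerProductSpace ℂ H]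
    {A D : H →L[ℂ] H} {lam : ℂ} (hP : IsUnit (lam ^ 2 • (1 : H →L[ℂ] H) + lam • D + A)) :
    IsUnit (algebraMap ℂ _ lam - Tlin A D) := by
  obtain ⟨P, hP⟩ := hP
  have hPapply (z : H) : (P : H →L[ℂ] H) z = lam ^ 2 • z + lam • D z + A z := by
    simp [hP]
  have hPQ (z : H) : (P : H →L[ℂ] H) ((↑P⁻¹ : H →L[ℂ] H) z) = z := by
    rw [← mul_apply_eq_comp, P.mul_inv, one_apply_eq_self]
  have hQP (z : H) : (↑P⁻¹ : H →L[ℂ] H) ((P : H →L[ℂ] H) z) = z := by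
    rw [← mul_apply_eq_comp, P.inv_mul, one_apply_eq_self]
  have hM (w : H × H) : (algebraMap ℂ _ lam - Tlin A D) w
      = (lam • w.1 + D w.1 + A w.2, lam • w.2 - w.1) := by
    ext <;> simp [Tlin, Algebra.algebraMap_eq_smul_one]; abel
  -- `(λ - T) w = (f, g)` forces `w₁ = λ w₂ - g` and `P(λ) w₂ = f + λ g + D g`
  let Y : (H × H) →L[ℂ] H :=
    (↑P⁻¹ : H →L[ℂ] H).comp (fst ℂ H H + lam • snd ℂ H H + D.comp (snd ℂ H H))
  have hY (w : H × H) : Y w = (↑P⁻¹ : H →L[ℂ] H) (w.1 + lam • w.2 + D w.2) := rfl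
  refine ⟨⟨_, (lam • Y - snd ℂ H H).prod Y, ContinuousLinearMap.ext fun w => ?_,
    ContinuousLinearMap.ext fun w => ?_⟩, rfl⟩
  · have hPY := hPQ (w.1 + lam • w.2 + D w.2)
    rw [hPapply, ← hY] at hPY
    rw [mul_apply_eq_comp, hM]
    ext
    · simp only [prod_apply, sub_apply, smul_apply, coe_snd', map_sub, map_smul,
        one_apply_eq_self]
      linear_combination (norm := module) hPY
    · simp
  · have hYM : Y ((algebraMap ℂ _ lam - Tlin A D) w) = w.2 := by
      rw [hY, hM]
      refine (congrArg _ ?_).trans (hQP w.2)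
      simp only [hPapply, map_sub, map_smul]
      module
    rw [mul_apply_eq_comp, prod_apply, sub_apply, smul_apply, hYM, coe_snd', hM]
    ext <;> simp

-- The constraints that `α, β, δ, ν` and `K = ‖D‖ₒₚ` impose on `(⟪x, D x⟫, ⟪x, A x⟫)` for `‖x‖ = 1`.
def admissiblePairs (α β δ ν K : ℝ) : Set (ℂ × ℝ) :=
  {p | β ≤ p.1.re ∧ δ * p.2 ≤ p.1.re ∧ α ≤ p.1.re * p.2 ∧ ‖p.1‖ ≤ K * p.2 ∧
    |p.1.im| ≤ ν * p.1.re}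

lemma isClosed_admissiblePairs (α β δ ν K : ℝ) : IsClosed (admissiblePairs α β δ ν K) := by
  simp only [admissiblePairs, Set.ofPred_and]
  refine (isClosed_le ?_ ?_).inter <| (isClosed_le ?_ ?_).inter <| (isClosed_le ?_ ?_).inter <|
    (isClosed_le ?_ ?_).inter (isClosed_le ?_ ?_) <;> fun_prop

section Operators
variable {H : Type*} [NormedAddCommGroup H] [InnerProductSpace ℂ H] [CompleteSpace H]
  {A D S Sinv : H →L[ℂ] H}

lemma mem_admissiblePairs (hS : IsSelfAdjoint S) (h : S * Sinv = 1) (h' : Sinv * S = 1)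
    (hD : ∀ x, 0 ≤ (⟪D x, x⟫_ℂ).re) {ν : ℝ} (hsec : ∀ x, |(⟪D x, x⟫_ℂ).im| ≤ ν * (⟪D x, x⟫_ℂ).re)
    {x : H} (hx : ‖x‖ = 1) :
    (⟪x, D x⟫_ℂ, ‖S x‖ ^ 2) ∈ admissiblePairs (coercivityConst D (‖Sinv ·‖))
      (coercivityConst D (‖·‖)) (coercivityConst D (‖S ·‖)) ν ‖Sinv * D * Sinv‖ := by
  have hx0 : x ≠ 0 := norm_ne_zero_iff.1 (by rw [hx]; exact one_ne_zero)
  have hconj : ⟪x, D x⟫_ℂ = (starRingEnd ℂ) ⟪D x, x⟫_ℂ := (inner_conj_symm _ _).symm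
  have hre : (⟪x, D x⟫_ℂ).re = (⟪D x, x⟫_ℂ).re := by rw [hconj, Complex.conj_re]
  simp only [admissiblePairs, Set.mem_ofPred_eq]
  refine ⟨?_, ?_, ?_, norm_inner_le_opNorm_mul_sq_norm hS h h' x, ?_⟩
  · simpa [hx, hre] using coercivityConst_mul_le hD (‖·‖) hx0
  · rw [hre]; exact coercivityConst_mul_le hD (‖S ·‖) hx0
  · have hα := coercivityConst_mul_le hD (‖Sinv ·‖) hx0
    have hα0 := coercivityConst_nonneg hD (‖Sinv ·‖)
    have hcs := sq_norm_le_norm_mul_norm hS h x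
    rw [hx, one_pow] at hcs
    rw [hre]
    nlinarith [mul_le_mul_of_nonneg_left (mul_le_mul hcs hcs zero_le_one (by positivity)) hα0]
  · rw [hre, hconj, Complex.conj_im, abs_neg]; exact hsec x

lemma inner_pencil_apply (hS : IsSelfAdjoint S) (hA : S * S = A) (lam : ℂ) {x : H}
    (hx : ‖x‖ = 1) :
    ⟪x, (lam ^ 2 • (1 : H →L[ℂ] H) + lam • D + A) x⟫_ℂ
      = lam ^ 2 + ⟪x, D x⟫_ℂ * lam + (‖S x‖ ^ 2 : ℝ) := by
  simp [inner_apply_eq_sq_norm hS hA, inner_self_eq_norm_sq_to_K, hx, mul_comm]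

lemma exists_root_of_mem_spectrum_Tlin [Nontrivial H] (hS : IsSelfAdjoint S) (hA : S * S = A)
    (h : S * Sinv = 1) (h' : Sinv * S = 1) (hD : ∀ x, 0 ≤ (⟪D x, x⟫_ℂ).re) {ν : ℝ}
    (hsec : ∀ x, |(⟪D x, x⟫_ℂ).im| ≤ ν * (⟪D x, x⟫_ℂ).re) {lam : ℂ}
    (hlam : lam ∈ spectrum ℂ (Tlin A D)) :
    ∃ p ∈ admissiblePairs (coercivityConst D (‖Sinv ·‖)) (coercivityConst D (‖·‖))
      (coercivityConst D (‖S ·‖)) ν ‖Sinv * D * Sinv‖,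
      0 < p.2 ∧ lam ^ 2 + p.1 * lam + p.2 = 0 := by
  have hSinv : 0 < ‖Sinv‖ := norm_pos_iff.2 (left_ne_zero_of_mul_eq_one h')
  have hP : ¬IsUnit (lam ^ 2 • (1 : H →L[ℂ] H) + lam • D + A) :=
    fun hP => spectrum.mem_iff.1 hlam (isUnit_sub_Tlin hP)
  have hK := ((isCompact_closedBall (0 : ℂ) ‖D‖).prod (isCompact_Icc (a := (‖Sinv‖ ^ 2)⁻¹)
    (b := ‖S‖ ^ 2))).inter_right (isClosed_admissiblePairs (coercivityConst D (‖Sinv ·‖))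
      (coercivityConst D (‖·‖)) (coercivityConst D (‖S ·‖)) ν ‖Sinv * D * Sinv‖)
  obtain ⟨p, ⟨⟨-, hp2⟩, hp⟩, hroot⟩ := hK.exists_eq_of_forall_dist_lt
    (f := fun p : ℂ × ℝ => lam ^ 2 + p.1 * lam + p.2) (by fun_prop) (y := 0) fun ε hε => by
      obtain ⟨x, hx, hxε⟩ := exists_norm_eq_one_norm_inner_lt hP hε
      have hSx : 1 ≤ ‖Sinv‖ * ‖S x‖ := hx ▸ norm_le_opNorm_mul_norm_apply h' x
      refine ⟨(⟪x, D x⟫_ℂ, ‖S x‖ ^ 2), ⟨⟨?_, ?_, ?_⟩, mem_admissiblePairs hS h h' hD hsec hx⟩, ?_⟩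
      · have := (norm_inner_le_norm (𝕜 := ℂ) x (D x)).trans
          (mul_le_mul_of_nonneg_left (D.le_opNorm x) (norm_nonneg x))
        simpa [hx] using this
      · rw [inv_le_iff_one_le_mul₀ (by positivity), ← mul_pow, mul_comm]
        exact one_le_pow₀ hSx
      · simpa [hx] using pow_le_pow_left₀ (norm_nonneg _) (S.le_opNorm x) 2
      · dsimp only
        rwa [dist_zero_right, ← inner_pencil_apply hS hA lam hx]
  exact ⟨p, hp, (inv_pos.2 (pow_pos hSinv 2)).trans_le hp2.1, hroot⟩

end Operators

theorem spectrum_subset_theta_general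
    {H : Type*} [NormedAddCommGroup H] [InnerProductSpace ℂ H] [CompleteSpace H]
    [Nontrivial H]
    (A D S Sinv : H →L[ℂ] H)
    (hSsa : IsSelfAdjoint S)
    (hSsq : S * S = A)
    (hSinv : S * Sinv = 1) (hSinv' : Sinv * S = 1)
    (hDacc : ∀ x : H, 0 ≤ (inner ℂ (D x) x : ℂ).re)
    (ν : ℝ)
    (hDsec : ∀ x : H, |(inner ℂ (D x) x : ℂ).im| ≤ ν * (inner ℂ (D x) x : ℂ).re)
    (α β δ : ℝ)
    (hα : α = ⨅ x : {x : H // x ≠ 0}, (inner ℂ (D (x : H)) (x : H) : ℂ).re / ‖Sinv (x : H)‖ ^ 2)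
    (hβ : β = ⨅ x : {x : H // x ≠ 0}, (inner ℂ (D (x : H)) (x : H) : ℂ).re / ‖(x : H)‖ ^ 2)
    (hδ : δ = ⨅ x : {x : H // x ≠ 0}, (inner ℂ (D (x : H)) (x : H) : ℂ).re / ‖S (x : H)‖ ^ 2)
    (hδpos : 0 < δ)
    (θ : ℝ) (hθ : 0 < θ)
    (ω : ℝ)
    (hω : ω = (1 / β + ‖Sinv * D * Sinv‖ ^ 2 / (2 * δ)
        + (θ / α + 1 / (θ * δ)) / 2
        + Real.sqrt ((θ / α + 1 / (θ * δ) + ‖Sinv * D * Sinv‖ ^ 2 / δ) ^ 2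
            - 4 / (α * δ)) / 2)⁻¹) :
    spectrum ℂ (Tlin A D) ⊆
      {lam : ℂ | lam.re ≤ -ω ∧
        |lam.im| ≤ (ν + 1 / (δ * Real.sqrt θ) + Real.sqrt θ / β) * |lam.re|} := by
  intro lam hlam
  replace hα : α = coercivityConst D (‖Sinv ·‖) := hα
  replace hβ : β = coercivityConst D (‖·‖) := hβ
  replace hδ : δ = coercivityConst D (‖S ·‖) := hδ
  subst hα hβ hδ hω
  have hβpos := coercivityConst_norm_pos hDacc hSinv' hδpos
  have hαpos := coercivityConst_inv_pos hDacc hSinv hSinv' hδpos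
  obtain ⟨⟨d, a⟩, ⟨hβd, hδd, hαd, hdK, hsec⟩, ha, hroot⟩ :=
    exists_root_of_mem_spectrum_Tlin hSsa hSsq hSinv hSinv' hDacc hDsec hlam
  exact ⟨re_le_of_quadratic hroot ha hαpos hβpos hδpos hβd hδd hαd hdK
      (two_le_mul_sqrt hαpos hδpos hθ),
    abs_im_le_of_quadratic hroot ha hβpos hδpos hθ hβd hδd hsec⟩

/-- if `δ > 0`, then for every `θ > 0` the spectrum of `T` is contained
in `{λ : re λ ≤ −ω_θ and |im λ| ≤ (ν + 1/(δ√θ) + √θ/β)·|re λ|}`. -/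
theorem spectrum_subset_theta
    {H : Type*} [NormedAddCommGroup H] [InnerProductSpace ℂ H] [CompleteSpace H]
    [Nontrivial H]
    (A D S Sinv : H →L[ℂ] H)
    (hA : IsSelfAdjoint A) (a₀ : ℝ) (ha₀ : 0 < a₀)
    (hApd : ∀ x : H, a₀ * ‖x‖ ^ 2 ≤ (inner ℂ (A x) x : ℂ).re)
    (hSsa : IsSelfAdjoint S) (hSpos : ∀ x : H, 0 ≤ (inner ℂ (S x) x : ℂ).re)
    (hSsq : S * S = A)
    (hSinv : S * Sinv = 1) (hSinv' : Sinv * S = 1)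
    (hDacc : ∀ x : H, 0 ≤ (inner ℂ (D x) x : ℂ).re)
    (ν : ℝ) (hν : 0 < ν)
    (hDsec : ∀ x : H, |(inner ℂ (D x) x : ℂ).im| ≤ ν * (inner ℂ (D x) x : ℂ).re)
    (α β δ : ℝ)
    (hα : α = ⨅ x : {x : H // x ≠ 0}, (inner ℂ (D (x : H)) (x : H) : ℂ).re / ‖Sinv (x : H)‖ ^ 2)
    (hβ : β = ⨅ x : {x : H // x ≠ 0}, (inner ℂ (D (x : H)) (x : H) : ℂ).re / ‖(x : H)‖ ^ 2)
    (hδ : δ = ⨅ x : {x : H // x ≠ 0}, (inner ℂ (D (x : H)) (x : H) : ℂ).re / ‖S (x : H)‖ ^ 2)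
    (hδpos : 0 < δ)
    (θ : ℝ) (hθ : 0 < θ)
    (ω : ℝ)
    (hω : ω = (1 / β + ‖Sinv * D * Sinv‖ ^ 2 / (2 * δ)
        + (θ / α + 1 / (θ * δ)) / 2
        + Real.sqrt ((θ / α + 1 / (θ * δ) + ‖Sinv * D * Sinv‖ ^ 2 / δ) ^ 2
            - 4 / (α * δ)) / 2)⁻¹) :
    spectrum ℂ (Tlin A D) ⊆
      {lam : ℂ | lam.re ≤ -ω ∧
        |lam.im| ≤ (ν + 1 / (δ * Real.sqrt θ) + Real.sqrt θ / β) * |lam.re|} :=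
  spectrum_subset_theta_general A D S Sinv hSsa hSsq hSinv hSinv' hDacc ν hDsec α β δ hα hβ hδ hδpos
    θ hθ ω hω
end
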